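/- Let B be a unital ℂ-algebra, α : A → A⊗B a linear map, and α̂ := (F⊗id_B)∘α∘F⁻¹ : A* → A*⊗B. Then α̂ is unital, i.e. α̂(ε) = ε⊗1_B (ε being the unit of the dual algebra A*), if and only if α preserves the Haar element, i.e. α(η) = η⊗1_B. -/

import Mathlib

/-! The Haar element is a left integral, so its Fourier transform is `F(η) = h(η) • ε`, and
`h(η) ≠ 0` because `h` is faithful and `ε(η) = 1`. Faithfulness also makes `F` injective, hence so
is `F ⊗ id` (every module over a field is flat). Applying `F ⊗ id` to `α(η) = η ⊗ 1` and using
`α̂ ∘ F = (F ⊗ id) ∘ α` turns it into `h(η) • α̂(ε) = h(η) • (ε ⊗ 1)`. -/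

open TensorProduct

noncomputable section

namespace QAG

variable {A : Type*} [Ring A] [HopfAlgebra ℂ A] [StarRing A] [StarModule ℂ A]
  [FiniteDimensional ℂ A]

/-- `(h ⊗ id)` as a map `A ⊗ A → A`. -/
def hTensorId (h : A →ₗ[ℂ] ℂ) : A ⊗[ℂ] A →ₗ[ℂ] A :=
  (TensorProduct.lid ℂ A).toLinearMap ∘ₗ TensorProduct.map h LinearMap.id

/-- `(id ⊗ h)` as a map `A ⊗ A → A`. -/
def idTensorH (h : A →ₗ[ℂ] ℂ) : A ⊗[ℂ] A →ₗ[ℂ] A :=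
  (TensorProduct.rid ℂ A).toLinearMap ∘ₗ TensorProduct.map LinearMap.id h

/-- The convolution product `a ⋆ b = (h ⊗ id)(((S ⊗ id)Δ(b))·(a ⊗ 1))`. -/
def conv (h : A →ₗ[ℂ] ℂ) (a b : A) : A :=
  hTensorId h
    ((TensorProduct.map (HopfAlgebra.antipode (R := ℂ)) LinearMap.id
        (Coalgebra.comul (R := ℂ) b)) * (a ⊗ₜ[ℂ] (1 : A)))

/-- The Fourier transform `F(a) = h(·a)` as an element of the dual space. -/
def fourier (h : A →ₗ[ℂ] ℂ) (a : A) : Module.Dual ℂ A :=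
  h ∘ₗ LinearMap.mulRight ℂ a

/-- The product of the dual algebra `A*`: `(ω₁·ω₂)(c) = (ω₁ ⊗ ω₂)(Δ(c))`. -/
def dualMul (φ ψ : Module.Dual ℂ A) : Module.Dual ℂ A :=
  (TensorProduct.lid ℂ ℂ).toLinearMap ∘ₗ TensorProduct.map φ ψ ∘ₗ Coalgebra.comul (R := ℂ)


/-- The Fourier transform `F : A → A*`, `F(a) = h(·a)`, as a linear map. -/
def fourierHom (h : A →ₗ[ℂ] ℂ) : A →ₗ[ℂ] Module.Dual ℂ A :=
  ((LinearMap.mul ℂ A).flip).compr₂ h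

/-- The convolution product of `A` as a bilinear map. -/
def convBilin (h : A →ₗ[ℂ] ℂ) : A →ₗ[ℂ] A →ₗ[ℂ] A :=
  ((((LinearMap.mul ℂ (A ⊗[ℂ] A)).compl₁₂
      ((TensorProduct.map (HopfAlgebra.antipode (R := ℂ)) LinearMap.id) ∘ₗ
        Coalgebra.comul (R := ℂ))
      ((TensorProduct.mk ℂ A A).flip (1 : A))).flip).compr₂ (hTensorId h))

/-- The product of the dual algebra `A*` as a bilinear map:
`(ω₁·ω₂)(c) = (ω₁ ⊗ ω₂)(Δ(c))`. -/
def dualMulBilin : Module.Dual ℂ A →ₗ[ℂ] Module.Dual ℂ A →ₗ[ℂ] Module.Dual ℂ A :=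
  (TensorProduct.mapBilinear (RingHom.id ℂ) A A ℂ ℂ).compr₂
    ((LinearMap.llcomp ℂ A (ℂ ⊗[ℂ] ℂ) ℂ (TensorProduct.lid ℂ ℂ).toLinearMap) ∘ₗ
      (LinearMap.lcomp ℂ (ℂ ⊗[ℂ] ℂ) (Coalgebra.comul (R := ℂ))))

section tensor
variable {B : Type*} [Ring B] [Algebra ℂ B]

/-- The product on `A ⊗ B` given by the convolution product `⋆` on the first tensor
factor and the multiplication of `B` on the second. -/
def convMulTensor (h : A →ₗ[ℂ] ℂ) :
    (A ⊗[ℂ] B) →ₗ[ℂ] (A ⊗[ℂ] B) →ₗ[ℂ] (A ⊗[ℂ] B) :=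
  TensorProduct.map₂ (convBilin h) (LinearMap.mul ℂ B)

/-- The product on `A* ⊗ B` given by the dual-algebra product on the first tensor
factor and the multiplication of `B` on the second. -/
def dualMulTensor :
    (Module.Dual ℂ A ⊗[ℂ] B) →ₗ[ℂ] (Module.Dual ℂ A ⊗[ℂ] B) →ₗ[ℂ] (Module.Dual ℂ A ⊗[ℂ] B) :=
  TensorProduct.map₂ dualMulBilin (LinearMap.mul ℂ B)

end tensor

section transport

variable {K M N B : Type*} [Field K] [AddCommGroup M] [Module K M] [AddCommGroup N] [Module K N]
  [AddCommGroup B] [Module K B]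

theorem apply_eq_tmul_iff_of_comp_eq (f : M →ₗ[K] N) (hf : Function.Injective f)
    (α : M →ₗ[K] M ⊗[K] B) (β : N →ₗ[K] N ⊗[K] B)
    (hβ : ∀ m, β (f m) = TensorProduct.map f LinearMap.id (α m))
    {x : M} {y : N} {c : K} (hc : c ≠ 0) (hxy : f x = c • y) (b : B) :
    β y = y ⊗ₜ[K] b ↔ α x = x ⊗ₜ[K] b := by
  have hmap : Function.Injective (TensorProduct.map f (LinearMap.id : B →ₗ[K] B)) :=
    Module.Flat.rTensor_preserves_injective_linearMap f hf
  rw [← hmap.eq_iff, TensorProduct.map_tmul, LinearMap.id_apply, ← hβ, hxy, map_smul,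
    ← TensorProduct.smul_tmul']
  exact (smul_right_injective _ hc).eq_iff.symm

end transport

omit [StarRing A] [StarModule ℂ A] [FiniteDimensional ℂ A] in
theorem fourierHom_apply (h : A →ₗ[ℂ] ℂ) (a b : A) : fourierHom h a b = h (b * a) := rfl

omit [StarModule ℂ A] [FiniteDimensional ℂ A] in
theorem fourierHom_injective {h : A →ₗ[ℂ] ℂ} (hfaithful : ∀ a : A, h (star a * a) = 0 → a = 0) :
    Function.Injective (fourierHom h) := by
  refine (injective_iff_map_eq_zero _).2 fun a ha => hfaithful a ?_
  rw [← fourierHom_apply, ha, LinearMap.zero_apply]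

omit [StarRing A] [StarModule ℂ A] [FiniteDimensional ℂ A] in
theorem fourierHom_eq_smul_counit_of_mul_eq_counit_smul (h : A →ₗ[ℂ] ℂ) {η : A}
    (hη : ∀ a : A, a * η = Coalgebra.counit (R := ℂ) a • η) :
    fourierHom h η = h η • (Coalgebra.counit (R := ℂ) : Module.Dual ℂ A) := by
  ext a
  rw [fourierHom_apply, hη, map_smul, LinearMap.smul_apply, smul_eq_mul, smul_eq_mul, mul_comm]

omit [StarModule ℂ A] [FiniteDimensional ℂ A] in
theorem apply_ne_zero_of_mul_eq_counit_smul {h : A →ₗ[ℂ] ℂ}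
    (hfaithful : ∀ a : A, h (star a * a) = 0 → a = 0) {η : A}
    (hη₁ : Coalgebra.counit (R := ℂ) η = 1)
    (hη₂ : ∀ a : A, a * η = Coalgebra.counit (R := ℂ) a • η) :
    h η ≠ 0 := by
  intro hzero
  have : η = 0 := hfaithful η (by rw [hη₂, map_smul, hzero, smul_zero])
  simp [this] at hη₁

theorem dual_map_unital_iff_haar_element_preserved_general
    (h : A →ₗ[ℂ] ℂ)
    -- `h` is faithful, hermitian, tracial, `S`-invariant and (bi-)invariant
    (hfaithful : ∀ a : A, h (star a * a) = 0 → a = 0)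
    -- the Haar element `η`
    (η : A) (hη₁ : Coalgebra.counit (R := ℂ) η = 1)
    (hη₂ : ∀ a : A, a * η = Coalgebra.counit (R := ℂ) a • η)
    {B : Type*} [Ring B] [Algebra ℂ B]
    (α : A →ₗ[ℂ] A ⊗[ℂ] B)
    (αhat : Module.Dual ℂ A →ₗ[ℂ] Module.Dual ℂ A ⊗[ℂ] B)
    -- `α̂ = (F ⊗ id) ∘ α ∘ F⁻¹`, i.e. `α̂ ∘ F = (F ⊗ id) ∘ α`
    (hαhat : ∀ a : A,
      αhat (fourierHom h a)
        = TensorProduct.map (fourierHom h) LinearMap.id (α a)) :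
    αhat (Coalgebra.counit (R := ℂ)) = (Coalgebra.counit (R := ℂ) : Module.Dual ℂ A) ⊗ₜ[ℂ] (1 : B)
      ↔ α η = η ⊗ₜ[ℂ] (1 : B) :=
  apply_eq_tmul_iff_of_comp_eq (fourierHom h) (fourierHom_injective hfaithful) α αhat hαhat
    (apply_ne_zero_of_mul_eq_counit_smul hfaithful hη₁ hη₂)
    (fourierHom_eq_smul_counit_of_mul_eq_counit_smul h hη₂) 1

/-- `α̂ = (F ⊗ id) ∘ α ∘ F⁻¹` is unital (`α̂(ε) = ε ⊗ 1`, `ε` being the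
unit of the dual algebra) iff `α` preserves the Haar element (`α(η) = η ⊗ 1`). -/
theorem dual_map_unital_iff_haar_element_preserved
    (h : A →ₗ[ℂ] ℂ)
    -- the antipode is an involution commuting with the `*`-operation
    (hSS : ∀ a : A, HopfAlgebra.antipode (R := ℂ) (HopfAlgebra.antipode (R := ℂ) a) = a)
    (hSstar : ∀ a : A, HopfAlgebra.antipode (R := ℂ) (star a)
      = star (HopfAlgebra.antipode (R := ℂ) a))
    -- `h` is faithful, hermitian, tracial, `S`-invariant and (bi-)invariant
    (hfaithful : ∀ a : A, h (star a * a) = 0 → a = 0)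
    (hhermitian : ∀ a : A, h (star a) = starRingEnd ℂ (h a))
    (htracial : ∀ a b : A, h (a * b) = h (b * a))
    (hSinv : ∀ a : A, h (HopfAlgebra.antipode (R := ℂ) a) = h a)
    (hinvl : ∀ a : A, hTensorId h (Coalgebra.comul (R := ℂ) a) = h a • (1 : A))
    (hinvr : ∀ a : A, idTensorH h (Coalgebra.comul (R := ℂ) a) = h a • (1 : A))
    -- strong invariance
    (hstrong : ∀ b c : A,
      HopfAlgebra.antipode (R := ℂ)
          (idTensorH h ((Coalgebra.comul (R := ℂ) b) * ((1 : A) ⊗ₜ[ℂ] c)))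
        = idTensorH h (((1 : A) ⊗ₜ[ℂ] b) * Coalgebra.comul (R := ℂ) c))
    -- the Haar element `η`
    (η : A) (hη₁ : Coalgebra.counit (R := ℂ) η = 1)
    (hη₂ : ∀ a : A, a * η = Coalgebra.counit (R := ℂ) a • η)
    {B : Type*} [Ring B] [Algebra ℂ B]
    (α : A →ₗ[ℂ] A ⊗[ℂ] B)
    (αhat : Module.Dual ℂ A →ₗ[ℂ] Module.Dual ℂ A ⊗[ℂ] B)
    -- `α̂ = (F ⊗ id) ∘ α ∘ F⁻¹`, i.e. `α̂ ∘ F = (F ⊗ id) ∘ α`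
    (hαhat : ∀ a : A,
      αhat (fourierHom h a)
        = TensorProduct.map (fourierHom h) LinearMap.id (α a)) :
    αhat (Coalgebra.counit (R := ℂ)) = (Coalgebra.counit (R := ℂ) : Module.Dual ℂ A) ⊗ₜ[ℂ] (1 : B)
      ↔ α η = η ⊗ₜ[ℂ] (1 : B) :=
  dual_map_unital_iff_haar_element_preserved_general h hfaithful η hη₁ hη₂ α αhat hαhat
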